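/- arXiv:2011.09077 — 3 statements merged into one kernel-verified Lean document; each statement's English description precedes it below -/
import Mathlib

section
/- Let Γ be a finite tree (a finite connected acyclic simple graph) with vertex set V of cardinality at least 2. Call a vertex a leaf if it has degree 1, and let t be the number of leaves. Let a : V → ℤ be arbitrary integer weights and n : V → ℤ be arbitrary positive integer weights on the leaves. Let D(Γ*) be the abelian group generated by elements e_v for v ∈ V, subject to the relations n_v·(a_v e_v + Σ_{w adjacent to v} e_w) = 0 for each leaf v, and a_v e_v + Σ_{w adjacent to v} e_w = 0 for each non-leaf v. Then D(Γ*) can be generated by at most t elements. -/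
/-!
Root the tree at any vertex `r`. Every non-leaf vertex `w` has at least two neighbours, at most
one of which is closer to `r`, so we may pick a child `f w` of `w`. Since a vertex has only one
parent, `f` is injective on the non-leaves. The relation at `w` expresses `e (f w)` through `e w`,
the parent of `w` and the other children of `w`; the latter are not in the image of `f`. By
induction on the distance to `r`, the `e v` with `v` outside the image of `f` generate the group,
and there are `|V| - #(non-leaves) = #leaves` of them.
-/

/-- The orbifold discriminant group of a weighted graph: the abelian group generated by
`e_v (v ∈ V)` with relations `n_v • (a_v e_v + Σ_{w ∼ v} e_w) = 0` at each leaf `v` (degree-1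
vertex) and `a_v e_v + Σ_{w ∼ v} e_w = 0` at each non-leaf `v`. -/
abbrev orbifoldDiscriminantGroup (V : Type*) [Fintype V] [DecidableEq V]
    (G : SimpleGraph V) [DecidableRel G.Adj] (a : V → ℤ) (n : V → ℤ) : Type _ :=
  (V →₀ ℤ) ⧸ AddSubgroup.closure (Set.range fun v : V =>
    (if G.degree v = 1 then n v else 1) •
      (Finsupp.single v (a v) + ∑ w ∈ G.neighborFinset v, Finsupp.single w 1))

theorem AddSubgroup.closure_image_eq_top_of_forall_mem_closure {M ι α : Type*} [AddGroup M]
    [Preorder α] [WellFoundedLT α] {x : ι → M} (hx : closure (Set.range x) = ⊤) (S : Set ι)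
    (h : ι → α) (hstep : ∀ i ∉ S, x i ∈ closure (x '' {j | h j < h i ∨ j ∈ S})) :
    closure (x '' S) = ⊤ := by
  suffices hmem : ∀ i, x i ∈ closure (x '' S) by
    rw [eq_top_iff, ← hx, closure_le]
    rintro _ ⟨i, rfl⟩
    exact hmem i
  intro i
  induction hi : h i using WellFoundedLT.induction generalizing i with
  | ind c IH =>
    by_cases hiS : i ∈ S
    · exact subset_closure ⟨i, hiS, rfl⟩
    refine closure_le _ |>.mpr ?_ (hstep i hiS)
    rintro _ ⟨j, hj | hj, rfl⟩
    · exact IH (h j) (hi ▸ hj) j rfl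
    · exact subset_closure ⟨j, hj, rfl⟩

namespace SimpleGraph

variable {V : Type*} {G : SimpleGraph V}

theorem IsTree.eq_of_adj_of_dist_add_one (hG : G.IsTree) (r : V) {v u₁ u₂ : V}
    (h₁ : G.Adj u₁ v) (h₂ : G.Adj u₂ v)
    (hd₁ : G.dist r u₁ + 1 = G.dist r v) (hd₂ : G.dist r u₂ + 1 = G.dist r v) :
    u₁ = u₂ := by
  classical
  have geodesic_concat {u} (h : G.Adj u v) (hd : G.dist r u + 1 = G.dist r v) :
      ∃ p : G.Walk r u, (p.concat h).IsPath := by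
    obtain ⟨p, hp, hlen⟩ := hG.connected.exists_path_of_dist r u
    refine ⟨p, hp.concat (fun hv ↦ ?_) h⟩
    have := (G.dist_le (p.takeUntil v hv)).trans (p.length_takeUntil_le_length hv)
    omega
  obtain ⟨p₁, hp₁⟩ := geodesic_concat h₁ hd₁
  obtain ⟨p₂, hp₂⟩ := geodesic_concat h₂ hd₂
  have := (hG.isAcyclic.subsingleton_path r v).elim ⟨_, hp₁⟩ ⟨_, hp₂⟩
  exact (Walk.concat_inj (congrArg Subtype.val this)).1

theorem IsTree.exists_adj_dist_eq_add_one (hG : G.IsTree) (r : V) {w : V}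
    [Fintype (G.neighborSet w)] (hw : 1 < G.degree w) :
    ∃ u, G.Adj w u ∧ G.dist r u = G.dist r w + 1 := by
  rw [← card_neighborFinset_eq_degree] at hw
  obtain ⟨u₁, hu₁, u₂, hu₂, hne⟩ := Finset.one_lt_card.mp hw
  rw [mem_neighborFinset] at hu₁ hu₂
  by_contra! hchild
  have hparent {u} (hu : G.Adj w u) : G.dist r u + 1 = G.dist r w :=
    ((hG.dist_eq_dist_add_one_of_adj r hu).resolve_right (hchild u hu)).symm
  exact hne (hG.eq_of_adj_of_dist_add_one r hu₁.symm hu₂.symm (hparent hu₁) (hparent hu₂))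

theorem IsTree.injOn_of_adj_of_dist_eq_add_one (hG : G.IsTree) (r : V) {s : Set V} {f : V → V}
    (hf : ∀ w ∈ s, G.Adj w (f w) ∧ G.dist r (f w) = G.dist r w + 1) : Set.InjOn f s :=
  fun w₁ h₁ w₂ h₂ heq ↦ by
    obtain ⟨hadj₁, hd₁⟩ := hf w₁ h₁
    obtain ⟨hadj₂, hd₂⟩ := hf w₂ h₂
    rw [heq] at hadj₁ hd₁
    exact hG.eq_of_adj_of_dist_add_one r hadj₁ hadj₂ hd₁.symm hd₂.symm

theorem IsTree.exists_forall_adj_dist_eq_add_one [Fintype V] [DecidableRel G.Adj] [Nontrivial V]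
    (hG : G.IsTree) (r : V) : ∃ f : V → V,
      ∀ w, G.degree w ≠ 1 → G.Adj w (f w) ∧ G.dist r (f w) = G.dist r w + 1 := by
  have hchild (w : V) : ∃ u, G.degree w ≠ 1 → G.Adj w u ∧ G.dist r u = G.dist r w + 1 := by
    by_cases hw : G.degree w = 1
    · exact ⟨w, absurd hw⟩
    have := hG.connected.preconnected.degree_pos_of_nontrivial w
    obtain ⟨u, hu⟩ := hG.exists_adj_dist_eq_add_one r (by omega : 1 < G.degree w)
    exact ⟨u, fun _ ↦ hu⟩
  choose f hf using hchild
  exact ⟨f, hf⟩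

end SimpleGraph

open Finset in
theorem Finset.card_compl_image_filter_not {α : Type*} [Fintype α] [DecidableEq α]
    (p : α → Prop) [DecidablePred p] {f : α → α} (hf : Set.InjOn f {x | ¬ p x}) :
    #((univ.filter (¬ p ·)).image f)ᶜ = #(univ.filter p) := by
  rw [card_compl, card_image_of_injOn (by simpa using hf), ← card_univ,
    ← card_filter_add_card_filter_not p]
  omega

namespace orbifoldDiscriminantGroup

noncomputable def of {V : Type*} [Fintype V] [DecidableEq V] (G : SimpleGraph V)
    [DecidableRel G.Adj] (a n : V → ℤ) (v : V) : orbifoldDiscriminantGroup V G a n :=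
  QuotientAddGroup.mk (Finsupp.single v 1)

variable {V : Type*} [Fintype V] [DecidableEq V] {G : SimpleGraph V} [DecidableRel G.Adj]
  {a n : V → ℤ}

theorem closure_range_of : AddSubgroup.closure (Set.range (of G a n)) = ⊤ := by
  rw [eq_top_iff]
  rintro x -
  induction x using QuotientAddGroup.induction_on with | H x => ?_
  induction x using Finsupp.induction_linear with
  | zero => exact zero_mem _
  | add x y hx hy => exact add_mem hx hy
  | single v b =>
    have hsingle : (Finsupp.single v b : orbifoldDiscriminantGroup V G a n) = b • of G a n v := by
      rw [of, ← QuotientAddGroup.mk_zsmul, Finsupp.smul_single, smul_eq_mul, mul_one]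
    rw [hsingle]
    exact zsmul_mem (AddSubgroup.subset_closure (Set.mem_range_self v)) b

theorem zsmul_of_add_sum_neighbor_of_eq_zero {w : V} (hw : G.degree w ≠ 1) :
    a w • of G a n w + ∑ u ∈ G.neighborFinset w, of G a n u = 0 := by
  have hrel : Finsupp.single w (a w) + ∑ u ∈ G.neighborFinset w, Finsupp.single u 1 ∈
      AddSubgroup.closure (Set.range fun v : V => (if G.degree v = 1 then n v else 1) •
        (Finsupp.single v (a v) + ∑ u ∈ G.neighborFinset v, Finsupp.single u 1)) :=
    AddSubgroup.subset_closure ⟨w, by simp only [if_neg hw, one_smul]⟩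
  rw [← (QuotientAddGroup.eq_zero_iff _).mpr hrel, QuotientAddGroup.mk_add,
    QuotientAddGroup.mk_sum]
  simp only [of, ← QuotientAddGroup.mk_zsmul, Finsupp.smul_single, smul_eq_mul, mul_one]

theorem closure_of_compl_image_eq_top (hG : G.IsTree) (r : V) {f : V → V}
    (hf : ∀ w, G.degree w ≠ 1 → G.Adj w (f w) ∧ G.dist r (f w) = G.dist r w + 1) :
    AddSubgroup.closure (of G a n '' (f '' {w | G.degree w ≠ 1})ᶜ) = ⊤ := by
  refine AddSubgroup.closure_image_eq_top_of_forall_mem_closure closure_range_of _ (G.dist r) ?_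
  intro v hv
  obtain ⟨w, hw, rfl⟩ := not_not.mp hv
  obtain ⟨hadj, hdist⟩ := hf w hw
  have hrel := zsmul_of_add_sum_neighbor_of_eq_zero (a := a) (n := n) hw
  rw [← Finset.add_sum_erase _ _ ((G.mem_neighborFinset w (f w)).mpr hadj), add_left_comm]
    at hrel
  rw [eq_neg_of_add_eq_zero_left hrel]
  set T := {u | G.dist r u < G.dist r (f w) ∨ u ∈ (f '' {w | G.degree w ≠ 1})ᶜ}
  have hT {u} (hu : u ∈ T) : of G a n u ∈ AddSubgroup.closure (of G a n '' T) :=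
    AddSubgroup.subset_closure (Set.mem_image_of_mem _ hu)
  refine neg_mem (add_mem (zsmul_mem (hT (Or.inl (by omega))) _) (sum_mem fun u hu ↦ hT ?_))
  obtain ⟨hne, hu⟩ := Finset.mem_erase.mp hu
  rw [SimpleGraph.mem_neighborFinset] at hu
  rcases hG.dist_eq_dist_add_one_of_adj r hu with hparent | hsibling
  · exact Or.inl (by omega)
  · refine Or.inr fun ⟨w', hw', hfw'⟩ ↦ hne ?_
    subst hfw'
    rw [hG.eq_of_adj_of_dist_add_one r (hf w' hw').1 hu (hf w' hw').2.symm hsibling.symm]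

end orbifoldDiscriminantGroup

theorem orbifold_discriminant_group_generators_general
    (V : Type*) [Fintype V] [DecidableEq V] (G : SimpleGraph V) [DecidableRel G.Adj]
    (hconn : G.Connected) (hacyc : G.IsAcyclic) (hcard : 2 ≤ Fintype.card V)
    (a : V → ℤ) (n : V → ℤ) :
    ∃ s : Finset (orbifoldDiscriminantGroup V G a n),
      s.card ≤ (Finset.univ.filter fun v : V => G.degree v = 1).card ∧
      AddSubgroup.closure (s : Set (orbifoldDiscriminantGroup V G a n)) = ⊤ := by
  classical
  have hG : G.IsTree := ⟨hconn, hacyc⟩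
  have : Nontrivial V := Fintype.one_lt_card_iff_nontrivial.mp hcard
  obtain ⟨r⟩ := hconn.nonempty
  obtain ⟨f, hf⟩ := hG.exists_forall_adj_dist_eq_add_one r
  refine ⟨((Finset.univ.filter fun w ↦ G.degree w ≠ 1).image f)ᶜ.image
    (orbifoldDiscriminantGroup.of G a n), Finset.card_image_le.trans ?_, ?_⟩
  · exact (Finset.card_compl_image_filter_not _ (hG.injOn_of_adj_of_dist_eq_add_one r hf)).le
  · simpa using orbifoldDiscriminantGroup.closure_of_compl_image_eq_top hG r hf

/-- Let `Γ` be a finite tree with at least two vertices, `a : V → ℤ` arbitrary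
integer weights and `n` positive integer weights on the leaves.  Then the orbifold discriminant
group `D(Γ*)` can be generated by at most `t` elements, where `t` is the number of leaves. -/
theorem orbifold_discriminant_group_generators
    (V : Type*) [Fintype V] [DecidableEq V] (G : SimpleGraph V) [DecidableRel G.Adj]
    (hconn : G.Connected) (hacyc : G.IsAcyclic) (hcard : 2 ≤ Fintype.card V)
    (a : V → ℤ) (n : V → ℤ) (hn : ∀ v, G.degree v = 1 → 0 < n v) :
    ∃ s : Finset (orbifoldDiscriminantGroup V G a n),
      s.card ≤ (Finset.univ.filter fun v : V => G.degree v = 1).card ∧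
      AddSubgroup.closure (s : Set (orbifoldDiscriminantGroup V G a n)) = ⊤ :=
  orbifold_discriminant_group_generators_general V G hconn hacyc hcard a n
end

section
/- Let r ≥ 3 be an integer, n₁, …, n_r positive integers, and a₁, …, a_{r−2} pairwise distinct complex numbers. Let I be the ideal of the polynomial ring ℂ[x₁, …, x_r] generated by the r−2 polynomials x_i^{n_i} + x_{r−1}^{n_{r−1}} + a_i·x_r^{n_r} for 1 ≤ i ≤ r−2, and let R = ℂ[x₁, …, x_r]/I. For each tuple ζ = (ζ₁, …, ζ_r) of complex numbers with ζ_i^{n_i} = 1 for all i, the ℂ-algebra automorphism of ℂ[x₁, …, x_r] sending x_i to ζ_i·x_i preserves I and hence induces a ℂ-algebra automorphism σ_ζ of R. Then the subalgebra of R consisting of elements fixed by σ_ζ for all such tuples ζ equals the ℂ-subalgebra of R generated by the images of x_{r−1}^{n_{r−1}} and x_r^{n_r} (equivalently, the image of the ℂ-algebra homomorphism ℂ[x,y] → R with x ↦ x_r^{n_r}, y ↦ x_{r−1}^{n_{r−1}}). -/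
/-!
Average over the finite group `μ = ∏ᵢ μ_{nᵢ}` of diagonal scalings. If `p` lifts a fixed element
`y`, the sum of the translates of `p` lifts `|μ| • y`, and summing the characters
`ζ ↦ ∏ ζᵢ^{dᵢ}` over `μ` kills every monomial `x^d` unless `nᵢ ∣ dᵢ` for all `i`. Those monomials
are products of the powers `xᵢ^{nᵢ}`, and modulo the Brieskorn relations each `xᵢ^{nᵢ}` with
`i ≤ r - 2` is a linear combination of `x_{r-1}^{n_{r-1}}` and `x_r^{n_r}`.
-/

open MvPolynomial

/-- The ideal of `ℂ[x₁, …, x_r]` generated by the `r - 2` Brieskorn polynomials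
`x_i^{n_i} + x_{r-1}^{n_{r-1}} + a_i x_r^{n_r}` (`1 ≤ i ≤ r-2`); variables are indexed by
`Fin r`, so `x_i` is `X ⟨i-1, _⟩`. -/
noncomputable def brieskornIdeal (r : ℕ) (hr : 3 ≤ r) (n : Fin r → ℕ) (a : Fin (r - 2) → ℂ) :
    Ideal (MvPolynomial (Fin r) ℂ) :=
  Ideal.span (Set.range fun i : Fin (r - 2) =>
    X (Fin.castLE (Nat.sub_le r 2) i) ^ n (Fin.castLE (Nat.sub_le r 2) i) +
    X (⟨r - 2, by omega⟩ : Fin r) ^ n (⟨r - 2, by omega⟩ : Fin r) +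
    C (a i) * X (⟨r - 1, by omega⟩ : Fin r) ^ n (⟨r - 1, by omega⟩ : Fin r))

open Finset

theorem IsPrimitiveRoot.sum_range_pow_pow {R : Type*} [CommRing R] [IsDomain R] {ζ : R} {m : ℕ}
    (hζ : IsPrimitiveRoot ζ m) (d : ℕ) :
    ∑ j ∈ range m, (ζ ^ j) ^ d = if m ∣ d then (m : R) else 0 := by
  simp_rw [← pow_mul, mul_comm _ d, pow_mul]
  split_ifs with h
  · simp [(hζ.pow_eq_one_iff_dvd d).2 h]
  · have hne : ζ ^ d - 1 ≠ 0 := sub_ne_zero.2 fun h1 => h ((hζ.pow_eq_one_iff_dvd d).1 h1)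
    refine eq_zero_of_ne_zero_of_mul_right_eq_zero hne ?_
    rw [geom_sum_mul, ← pow_mul, mul_comm, pow_mul, hζ.pow_eq_one, one_pow, sub_self]

namespace MvPolynomial

variable {R σ : Type*} [CommSemiring R]

theorem aeval_C_mul_X_monomial (ζ : σ → R) (d : σ →₀ ℕ) (c : R) :
    aeval (fun i => C (ζ i) * X i) (monomial d c) =
      monomial d ((d.prod fun i k => ζ i ^ k) * c) := by
  rw [aeval_monomial, algebraMap_eq]
  simp only [mul_pow, Finsupp.prod_mul, ← C_pow]
  rw [← map_finsuppProd C, mul_left_comm, ← monomial_eq, C_mul_monomial]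

theorem coeff_aeval_C_mul_X [Fintype σ] (ζ : σ → R) (p : MvPolynomial σ R) (d : σ →₀ ℕ) :
    coeff d (aeval (fun i => C (ζ i) * X i) p) = (∏ i, ζ i ^ d i) * coeff d p := by
  classical
  induction p using MvPolynomial.induction_on' with
  | monomial e c =>
    rw [aeval_C_mul_X_monomial, coeff_monomial, coeff_monomial]
    split_ifs with h
    · rw [h, Finsupp.prod_fintype _ _ fun i => pow_zero _]
    · rw [mul_zero]
  | add p q hp hq => simp only [map_add, coeff_add, hp, hq, mul_add]

theorem mem_adjoin_range_X_pow_of_dvd {n : σ → ℕ} {p : MvPolynomial σ R}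
    (hp : ∀ d ∈ p.support, ∀ i, n i ∣ d i) :
    p ∈ Algebra.adjoin R (Set.range fun i => (X i ^ n i : MvPolynomial σ R)) := by
  rw [p.as_sum]
  refine Subalgebra.sum_mem _ fun d hd => ?_
  rw [monomial_eq, ← algebraMap_eq]
  refine Subalgebra.mul_mem _ (Subalgebra.algebraMap_mem _ _) (Subalgebra.prod_mem _ fun i _ => ?_)
  show X i ^ d i ∈ _
  rw [← Nat.mul_div_cancel' (hp d hd i), pow_mul]
  exact Subalgebra.pow_mem _ (Algebra.subset_adjoin (Set.mem_range_self i)) _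

theorem coeff_sum_aeval_pow_mul_X {K : Type*} [CommRing K] [IsDomain K] [Fintype σ]
    [DecidableEq σ] {n : σ → ℕ} {ω : σ → K} (hω : ∀ i, IsPrimitiveRoot (ω i) (n i))
    (p : MvPolynomial σ K) (d : σ →₀ ℕ) :
    coeff d (∑ k ∈ Fintype.piFinset fun i => range (n i), aeval (fun i => C (ω i ^ k i) * X i) p)
      = if ∀ i, n i ∣ d i then (∏ i, (n i : K)) * coeff d p else 0 := by
  simp_rw [coeff_sum, coeff_aeval_C_mul_X, ← sum_mul]
  rw [← prod_univ_sum (fun i => range (n i)) fun i j => (ω i ^ j) ^ d i]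
  simp_rw [(hω _).sum_range_pow_pow, Fintype.prod_ite_zero, ite_mul, zero_mul]

theorem mk_mem_adjoin_X_pow_of_forall_aeval_eq {K : Type*} [Field K] [Fintype σ]
    (I : Ideal (MvPolynomial σ K)) {n : σ → ℕ} (hn : ∀ i, n i ≠ 0) {ω : σ → K}
    (hω : ∀ i, IsPrimitiveRoot (ω i) (n i)) {p : MvPolynomial σ K}
    (hp : ∀ ζ : σ → K, (∀ i, ζ i ^ n i = 1) →
      Ideal.Quotient.mk I (aeval (fun i => C (ζ i) * X i) p) = Ideal.Quotient.mk I p) :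
    Ideal.Quotient.mk I p ∈
      Algebra.adjoin K (Set.range fun i => Ideal.Quotient.mk I (X i ^ n i)) := by
  classical
  set N : K := ∏ i, (n i : K)
  set q := ∑ k ∈ Fintype.piFinset fun i => range (n i), aeval (fun i => C (ω i ^ k i) * X i) p
  have hN : N ≠ 0 := prod_ne_zero_iff.2 fun i _ =>
    haveI : NeZero (n i) := ⟨hn i⟩
    (hω i).neZero'.out
  have hq : q ∈ Algebra.adjoin K (Set.range fun i => (X i ^ n i : MvPolynomial σ K)) := by
    refine mem_adjoin_range_X_pow_of_dvd fun d hd => ?_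
    rw [mem_support_iff, coeff_sum_aeval_pow_mul_X hω] at hd
    exact of_not_not fun h => hd (if_neg h)
  have hmk : Ideal.Quotient.mk I q = N • Ideal.Quotient.mk I p := by
    have hroot (k : σ → ℕ) (i : σ) : (ω i ^ k i) ^ n i = 1 := by
      rw [pow_right_comm, (hω i).pow_eq_one, one_pow]
    rw [map_sum, sum_congr rfl fun k _ => hp _ (hroot k), sum_const, Fintype.card_piFinset]
    simp_rw [card_range, N, ← Nat.cast_prod, Nat.cast_smul_eq_nsmul]
  have hmkq := Subalgebra.mem_map (f := Ideal.Quotient.mkₐ K I) |>.2 ⟨q, hq, rfl⟩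
  rw [AlgHom.map_adjoin, ← Set.range_comp] at hmkq
  have hpq : Ideal.Quotient.mk I p = N⁻¹ • Ideal.Quotient.mk I q := by
    rw [hmk, inv_smul_smul₀ hN]
  rw [hpq]
  exact Subalgebra.smul_mem _ hmkq _

end MvPolynomial

theorem brieskorn_mk_X_pow_mem_adjoin (r : ℕ) (hr : 3 ≤ r) (n : Fin r → ℕ)
    (a : Fin (r - 2) → ℂ) (i : Fin r) :
    Ideal.Quotient.mk (brieskornIdeal r hr n a) (X i ^ n i) ∈
      Algebra.adjoin ℂ
        ({Ideal.Quotient.mk (brieskornIdeal r hr n a)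
            (X (⟨r - 2, by omega⟩ : Fin r) ^ n (⟨r - 2, by omega⟩ : Fin r)),
          Ideal.Quotient.mk (brieskornIdeal r hr n a)
            (X (⟨r - 1, by omega⟩ : Fin r) ^ n (⟨r - 1, by omega⟩ : Fin r))} :
          Set (MvPolynomial (Fin r) ℂ ⧸ brieskornIdeal r hr n a)) := by
  set mk := Ideal.Quotient.mk (brieskornIdeal r hr n a)
  set j : Fin r := ⟨r - 2, by omega⟩
  set k : Fin r := ⟨r - 1, by omega⟩
  have hj : mk (X j ^ n j) ∈ Algebra.adjoin ℂ {mk (X j ^ n j), mk (X k ^ n k)} :=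
    Algebra.subset_adjoin (Set.mem_insert _ _)
  have hk : mk (X k ^ n k) ∈ Algebra.adjoin ℂ {mk (X j ^ n j), mk (X k ^ n k)} :=
    Algebra.subset_adjoin (Set.mem_insert_of_mem _ rfl)
  obtain hi | rfl | rfl : (i : ℕ) < r - 2 ∨ i = j ∨ i = k := by
    simp only [j, k, Fin.ext_iff]; omega
  · have hrel : mk (X i ^ n i + X j ^ n j + C (a ⟨i, hi⟩) * X k ^ n k) = 0 :=
      Ideal.Quotient.eq_zero_iff_mem.2 (Ideal.subset_span ⟨⟨i, hi⟩, rfl⟩)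
    rw [add_assoc, map_add, add_eq_zero_iff_eq_neg] at hrel
    rw [hrel, map_add, map_mul]
    exact neg_mem (add_mem hj (mul_mem (Subalgebra.algebraMap_mem _ (a ⟨i, hi⟩)) hk))
  · exact hj
  · exact hk

/-- Let `r ≥ 3`, `n₁, …, n_r` positive integers, `a₁, …, a_{r-2}` pairwise
distinct complex numbers, and `R = ℂ[x₁, …, x_r]/I` the Brieskorn complete intersection ring.
For each tuple `ζ` of roots of unity with `ζ_i^{n_i} = 1`, the automorphism `x_i ↦ ζ_i x_i`
induces an automorphism `σ_ζ` of `R`.  The subalgebra of elements fixed by all the `σ_ζ` equals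
the `ℂ`-subalgebra generated by the images of `x_{r-1}^{n_{r-1}}` and `x_r^{n_r}`. -/
theorem brieskorn_invariant_subalgebra
    (r : ℕ) (hr : 3 ≤ r) (n : Fin r → ℕ) (hn : ∀ i, 0 < n i)
    (a : Fin (r - 2) → ℂ)
    (σ : (Fin r → ℂ) →
      ((MvPolynomial (Fin r) ℂ ⧸ brieskornIdeal r hr n a) ≃ₐ[ℂ]
        (MvPolynomial (Fin r) ℂ ⧸ brieskornIdeal r hr n a)))
    (hσ : ∀ ζ : Fin r → ℂ, (∀ i, ζ i ^ n i = 1) → ∀ p : MvPolynomial (Fin r) ℂ,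
      σ ζ (Ideal.Quotient.mk (brieskornIdeal r hr n a) p) =
        Ideal.Quotient.mk (brieskornIdeal r hr n a)
          (aeval (fun i => C (ζ i) * X i) p)) :
    {y : MvPolynomial (Fin r) ℂ ⧸ brieskornIdeal r hr n a |
        ∀ ζ : Fin r → ℂ, (∀ i, ζ i ^ n i = 1) → σ ζ y = y} =
      ↑(Algebra.adjoin ℂ
        ({Ideal.Quotient.mk (brieskornIdeal r hr n a)
            (X (⟨r - 2, by omega⟩ : Fin r) ^ n (⟨r - 2, by omega⟩ : Fin r)),
          Ideal.Quotient.mk (brieskornIdeal r hr n a)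
            (X (⟨r - 1, by omega⟩ : Fin r) ^ n (⟨r - 1, by omega⟩ : Fin r))} :
          Set (MvPolynomial (Fin r) ℂ ⧸ brieskornIdeal r hr n a))) := by
  ext y
  constructor
  · intro hy
    obtain ⟨p, rfl⟩ := Ideal.Quotient.mk_surjective y
    have hp := mk_mem_adjoin_X_pow_of_forall_aeval_eq _ (fun i => (hn i).ne')
      (fun i => Complex.isPrimitiveRoot_exp (n i) (hn i).ne')
      fun ζ hζ => by rw [← hσ ζ hζ, hy ζ hζ]
    refine Algebra.adjoin_le ?_ hp
    rintro _ ⟨i, rfl⟩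
    exact brieskorn_mk_X_pow_mem_adjoin r hr n a i
  · intro hy ζ hζ
    have hfix : ∀ i, σ ζ (Ideal.Quotient.mk _ (X i ^ n i)) = Ideal.Quotient.mk _ (X i ^ n i) :=
      fun i => by rw [hσ ζ hζ, map_pow, aeval_X, mul_pow, ← C_pow, hζ i, C_1, one_mul]
    refine (Algebra.adjoin_le ?_ : _ ≤ AlgHom.equalizer (σ ζ : _ →ₐ[ℂ] _) (AlgHom.id ℂ _)) hy
    rintro _ (rfl | rfl)
    · exact hfix _
    · exact hfix _
end

section
/- Let k ≥ 1 be an integer and ζ ∈ ℂ a primitive (2k+1)-st root of unity. Let S = ℂ[x,u,v]/(xv − u²). The ℂ-algebra automorphism of ℂ[x,u,v] sending x ↦ x, u ↦ ζ·u, v ↦ ζ²·v maps xv − u² to ζ²·(xv − u²), hence preserves the ideal (xv − u²) and induces a ℂ-algebra automorphism σ of S. Then the subalgebra of S consisting of elements fixed by σ equals the ℂ-subalgebra of S generated by the images of x, u·v^k and v^{2k+1}. -/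
open MvPolynomial

/-- The coordinate ring `S = ℂ[x,u,v]/(xv - u²)` of the `A₁` singularity, with variables
`x = X 0`, `u = X 1`, `v = X 2`. -/
noncomputable abbrev A1Ring : Type :=
  MvPolynomial (Fin 3) ℂ ⧸ Ideal.span ({X 0 * X 2 - X 1 ^ 2} : Set (MvPolynomial (Fin 3) ℂ))

/-!
`σ` is the scaling `xᵢ ↦ ζ ^ wᵢ xᵢ` for the weights `w = (0, 1, 2)`, so the image of a monomial
of weight `m` is an eigenvector of `σ` with eigenvalue `ζ ^ m`. Averaging over the cyclic group
`⟨σ⟩` of order `2k + 1`, which is invertible in `ℂ`, retracts `S` onto the invariants and kills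
every monomial whose weight is not divisible by `2k + 1`; hence the invariants are spanned by the
monomials `xᵃ uᵇ vᶜ` with `2k + 1 ∣ b + 2c`. Using `u² = xv` we may take `b ≤ 1`, and then
`c ≡ bk (mod 2k + 1)` writes the monomial as `xᵃ (u vᵏ)ᵇ (v²ᵏ⁺¹)ˢ`. Conversely each of these three
generators has weight divisible by `2k + 1`, hence is fixed.
-/

open Finset

theorem aeval_C_pow_mul_X_monomial {ι R : Type*} [CommSemiring R] (w : ι → ℕ) (ζ : R)
    (d : ι →₀ ℕ) (r : R) :
    aeval (fun i => C (ζ ^ w i) * X i) (monomial d r) =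
      C (ζ ^ Finsupp.weight w d) * monomial d r := by
  rw [aeval_monomial, Finsupp.weight_apply, monomial_eq, Finsupp.prod, Finsupp.prod, Finsupp.sum]
  simp only [mul_pow, ← map_pow, ← pow_mul, prod_mul_distrib, ← map_prod, prod_pow_eq_pow_sum,
    algebraMap_eq, smul_eq_mul, mul_comm (w _)]
  ring

theorem aeval_C_pow_mul_X_of_isWeightedHomogeneous {ι R : Type*} [CommSemiring R] {w : ι → ℕ}
    (ζ : R) {p : MvPolynomial ι R} {m : ℕ} (hp : IsWeightedHomogeneous w p m) :
    aeval (fun i => C (ζ ^ w i) * X i) p = C (ζ ^ m) * p := by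
  rw [p.as_sum, map_sum, mul_sum]
  refine sum_congr rfl fun d hd => ?_
  rw [aeval_C_pow_mul_X_monomial, hp (mem_support_iff.mp hd)]

namespace AlgEquiv

variable {K A : Type*} [Field K] [Semiring A] [Algebra K A] (σ : A ≃ₐ[K] A)

theorem pow_apply_of_apply_eq_smul {x : A} {c : K} (h : σ x = c • x) (j : ℕ) :
    (σ ^ j) x = c ^ j • x := by
  induction j with
  | zero => simp
  | succ j ih => rw [pow_succ', mul_apply, ih, map_smul, h, smul_smul, pow_succ]

theorem mem_of_apply_eq_self_of_sum_pow_apply_mem {n : ℕ} (hn : (n : K) ≠ 0) {B : Submodule K A}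
    (hB : ∀ y, ∑ j ∈ range n, (σ ^ j) y ∈ B) {y : A} (hy : σ y = y) : y ∈ B := by
  have hfix (j : ℕ) : (σ ^ j) y = y := by rw [coe_pow]; exact Function.iterate_fixed hy j
  have hsum : ∑ j ∈ range n, (σ ^ j) y = (n : K) • y := by
    simp only [hfix, sum_const, card_range, Nat.cast_smul_eq_nsmul]
  have hmem := B.smul_mem (n : K)⁻¹ (hB y)
  rwa [hsum, smul_smul, inv_mul_cancel₀ hn, one_smul] at hmem

end AlgEquiv

section WeightedScaling

variable {K ι : Type*} [Field K] {I : Ideal (MvPolynomial ι K)} {w : ι → ℕ} {ζ : K}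
  {σ : (MvPolynomial ι K ⧸ I) ≃ₐ[K] (MvPolynomial ι K ⧸ I)}

theorem apply_mk_of_isWeightedHomogeneous
    (hσ : ∀ p, σ (Ideal.Quotient.mk I p) =
      Ideal.Quotient.mk I (aeval (fun i => C (ζ ^ w i) * X i) p))
    {p : MvPolynomial ι K} {m : ℕ} (hp : IsWeightedHomogeneous w p m) :
    σ (Ideal.Quotient.mk I p) = ζ ^ m • Ideal.Quotient.mk I p := by
  rw [hσ, aeval_C_pow_mul_X_of_isWeightedHomogeneous ζ hp, ← smul_eq_C_mul,
    ← Ideal.Quotient.mkₐ_eq_mk K, map_smul]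

theorem apply_mk_eq_self_of_isWeightedHomogeneous
    (hσ : ∀ p, σ (Ideal.Quotient.mk I p) =
      Ideal.Quotient.mk I (aeval (fun i => C (ζ ^ w i) * X i) p))
    {n : ℕ} (hζ : IsPrimitiveRoot ζ n) {p : MvPolynomial ι K} {m : ℕ}
    (hp : IsWeightedHomogeneous w p m) (hm : n ∣ m) :
    σ (Ideal.Quotient.mk I p) = Ideal.Quotient.mk I p := by
  rw [apply_mk_of_isWeightedHomogeneous hσ hp, (hζ.pow_eq_one_iff_dvd m).2 hm, one_smul]

theorem sum_pow_apply_mk_of_isWeightedHomogeneous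
    (hσ : ∀ p, σ (Ideal.Quotient.mk I p) =
      Ideal.Quotient.mk I (aeval (fun i => C (ζ ^ w i) * X i) p))
    {n : ℕ} (hζ : IsPrimitiveRoot ζ n) {p : MvPolynomial ι K} {m : ℕ}
    (hp : IsWeightedHomogeneous w p m) :
    ∑ j ∈ range n, (σ ^ j) (Ideal.Quotient.mk I p) =
      if n ∣ m then (n : K) • Ideal.Quotient.mk I p else 0 := by
  simp only [σ.pow_apply_of_apply_eq_smul (apply_mk_of_isWeightedHomogeneous hσ hp), ← sum_smul]
  split_ifs with hm
  · simp [(hζ.pow_eq_one_iff_dvd m).2 hm]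
  · have hne : ζ ^ m ≠ 1 := mt (hζ.pow_eq_one_iff_dvd m).1 hm
    rw [geom_sum_eq hne, ← pow_mul, mul_comm, pow_mul, hζ.pow_eq_one, one_pow, sub_self,
      zero_div, zero_smul]

theorem mem_of_apply_eq_self
    (hσ : ∀ p, σ (Ideal.Quotient.mk I p) =
      Ideal.Quotient.mk I (aeval (fun i => C (ζ ^ w i) * X i) p))
    {n : ℕ} (hζ : IsPrimitiveRoot ζ n) (hn : (n : K) ≠ 0)
    {B : Submodule K (MvPolynomial ι K ⧸ I)}
    (hB : ∀ d, n ∣ Finsupp.weight w d → Ideal.Quotient.mk I (monomial d 1) ∈ B)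
    {y : MvPolynomial ι K ⧸ I} (hy : σ y = y) : y ∈ B := by
  refine σ.mem_of_apply_eq_self_of_sum_pow_apply_mem hn (fun y => ?_) hy
  obtain ⟨p, rfl⟩ := Ideal.Quotient.mk_surjective y
  rw [p.as_sum]
  simp only [map_sum]
  rw [sum_comm]
  refine B.sum_mem fun d _ => ?_
  rw [sum_pow_apply_mk_of_isWeightedHomogeneous hσ hζ (isWeightedHomogeneous_monomial w d _ rfl)]
  split_ifs with hd
  · rw [← mul_one (coeff d p), ← smul_eq_mul, ← smul_monomial, ← Ideal.Quotient.mkₐ_eq_mk K,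
      map_smul]
    exact B.smul_mem _ (B.smul_mem _ (hB d hd))
  · exact B.zero_mem

end WeightedScaling

theorem Nat.exists_eq_mul_add_mul_of_dvd {k e c : ℕ} (he : e < 2) (h : 2 * k + 1 ∣ e + 2 * c) :
    ∃ s, c = e * k + (2 * k + 1) * s := by
  obtain ⟨t, ht⟩ := h
  obtain ⟨s, rfl | rfl⟩ := Nat.even_or_odd' t <;>
  · refine ⟨s, ?_⟩
    interval_cases e <;> ring_nf at ht ⊢ <;> omega

theorem pow_mul_pow_mul_pow_mem_adjoin {R S : Type*} [CommSemiring R] [CommSemiring S]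
    [Algebra R S] {x u v : S} (huv : u ^ 2 = x * v) (k : ℕ) {a b c : ℕ}
    (h : 2 * k + 1 ∣ b + 2 * c) :
    x ^ a * u ^ b * v ^ c ∈ Algebra.adjoin R {x, u * v ^ k, v ^ (2 * k + 1)} := by
  obtain ⟨s, hs⟩ : ∃ s, c + b / 2 = b % 2 * k + (2 * k + 1) * s :=
    Nat.exists_eq_mul_add_mul_of_dvd (Nat.mod_lt b two_pos)
      (by rwa [show b % 2 + 2 * (c + b / 2) = b + 2 * c by omega])
  have hmono : x ^ a * u ^ b * v ^ c =
      x ^ (a + b / 2) * (u * v ^ k) ^ (b % 2) * (v ^ (2 * k + 1)) ^ s := by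
    calc x ^ a * u ^ b * v ^ c = x ^ a * u ^ (b % 2) * (u ^ 2) ^ (b / 2) * v ^ c := by
          conv_lhs => rw [← Nat.mod_add_div b 2, pow_add, pow_mul]
          ring
      _ = x ^ (a + b / 2) * u ^ (b % 2) * v ^ (c + b / 2) := by rw [huv]; ring
      _ = _ := by rw [hs]; ring
  rw [hmono]
  refine mul_mem (mul_mem (pow_mem ?_ _) (pow_mem ?_ _)) (pow_mem ?_ _) <;>
    exact Algebra.subset_adjoin (by simp)

theorem A1Ring.mk_X_one_sq :
    (Ideal.Quotient.mk _ (X 1) ^ 2 : A1Ring) =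
      Ideal.Quotient.mk _ (X 0) * Ideal.Quotient.mk _ (X 2) := by
  rw [← map_pow, ← map_mul, Ideal.Quotient.eq, Ideal.mem_span_singleton]
  exact ⟨-1, by ring⟩

theorem A1Ring.mk_monomial_mem_adjoin (k : ℕ) {d : Fin 3 →₀ ℕ} (hd : 2 * k + 1 ∣ d 1 + 2 * d 2) :
    (Ideal.Quotient.mk _ (monomial d 1) : A1Ring) ∈
      Algebra.adjoin ℂ {Ideal.Quotient.mk _ (X 0), Ideal.Quotient.mk _ (X 1 * X 2 ^ k),
        Ideal.Quotient.mk _ (X 2 ^ (2 * k + 1))} := by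
  rw [monomial_eq, Finsupp.prod_fintype _ _ (fun _ => pow_zero _), Fin.prod_univ_three, C_1,
    one_mul]
  simpa only [map_mul, map_pow] using
    pow_mul_pow_mul_pow_mem_adjoin (R := ℂ) A1Ring.mk_X_one_sq k (a := d 0) hd

theorem cyclic_cover_invariants_odd_general
    (k : ℕ) (ζ : ℂ) (hζ : IsPrimitiveRoot ζ (2 * k + 1))
    (σ : A1Ring ≃ₐ[ℂ] A1Ring)
    (hσ : ∀ p : MvPolynomial (Fin 3) ℂ,
      σ (Ideal.Quotient.mk _ p) =
        Ideal.Quotient.mk _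
          (aeval (fun i : Fin 3 =>
            if i = 0 then X 0 else if i = 1 then C ζ * X 1 else C (ζ ^ 2) * X 2) p)) :
    {y : A1Ring | σ y = y} =
      ↑(Algebra.adjoin ℂ
        ({Ideal.Quotient.mk _ (X 0),
          Ideal.Quotient.mk _ (X 1 * X 2 ^ k),
          Ideal.Quotient.mk _ (X 2 ^ (2 * k + 1))} : Set A1Ring)) := by
  set w : Fin 3 → ℕ := fun i => i
  have hscaling : (fun i : Fin 3 =>
      if i = 0 then X 0 else if i = 1 then C ζ * X 1 else C (ζ ^ 2) * X 2) =
      fun i => C (ζ ^ w i) * X i := by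
    funext i; fin_cases i <;> simp [w]
  rw [hscaling] at hσ
  have hweight (d : Fin 3 →₀ ℕ) : Finsupp.weight w d = d 1 + 2 * d 2 := by
    simp [Finsupp.weight_apply, Finsupp.sum_fintype, Fin.sum_univ_three, w, mul_comm]
  refine Set.Subset.antisymm (fun y hy => ?_) (fun y hy => ?_)
  · rw [SetLike.mem_coe, ← Subalgebra.mem_toSubmodule]
    exact mem_of_apply_eq_self hσ hζ (by norm_cast)
      (fun d hd => A1Ring.mk_monomial_mem_adjoin k (hweight d ▸ hd)) hy
  · refine (AlgHom.mem_equalizer (σ : A1Ring →ₐ[ℂ] A1Ring) (AlgHom.id ℂ A1Ring) y).1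
      (Algebra.adjoin_le ?_ hy)
    rintro _ (rfl | rfl | rfl)
    · exact apply_mk_eq_self_of_isWeightedHomogeneous hσ hζ (isWeightedHomogeneous_X ℂ w 0)
        (dvd_zero _)
    · exact apply_mk_eq_self_of_isWeightedHomogeneous hσ hζ
        ((isWeightedHomogeneous_X ℂ w 1).mul ((isWeightedHomogeneous_X ℂ w 2).pow k))
        ⟨1, by simp [w]; ring⟩
    · exact apply_mk_eq_self_of_isWeightedHomogeneous hσ hζ
        ((isWeightedHomogeneous_X ℂ w 2).pow (2 * k + 1)) (dvd_mul_right _ _)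

/-- Let `k ≥ 1`, `ζ` a primitive `(2k+1)`-st root of unity, and
`S = ℂ[x,u,v]/(xv - u²)`.  The automorphism `x ↦ x, u ↦ ζu, v ↦ ζ²v` preserves the ideal
`(xv - u²)` and induces a `ℂ`-algebra automorphism `σ` of `S`; the subalgebra of elements of `S`
fixed by `σ` equals the `ℂ`-subalgebra generated by the images of `x`, `u·v^k` and `v^{2k+1}`. -/
theorem cyclic_cover_invariants_odd
    (k : ℕ) (hk : 1 ≤ k) (ζ : ℂ) (hζ : IsPrimitiveRoot ζ (2 * k + 1))
    (σ : A1Ring ≃ₐ[ℂ] A1Ring)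
    (hσ : ∀ p : MvPolynomial (Fin 3) ℂ,
      σ (Ideal.Quotient.mk _ p) =
        Ideal.Quotient.mk _
          (aeval (fun i : Fin 3 =>
            if i = 0 then X 0 else if i = 1 then C ζ * X 1 else C (ζ ^ 2) * X 2) p)) :
    {y : A1Ring | σ y = y} =
      ↑(Algebra.adjoin ℂ
        ({Ideal.Quotient.mk _ (X 0),
          Ideal.Quotient.mk _ (X 1 * X 2 ^ k),
          Ideal.Quotient.mk _ (X 2 ^ (2 * k + 1))} : Set A1Ring)) :=
  cyclic_cover_invariants_odd_general k ζ hζ σ hσ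
end
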